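/- arXiv:2602.12713 — 8 statements merged into one kernel-verified Lean document; each statement's English description precedes it below -/
import Mathlib

section
/- If (X,Y) are independent with X ∼ GIG(−λ, αγ₁, γ₂) and Y ∼ GIG(−λ, βγ₂, γ₁), and (U,V) = (Y(1+βXY)/(1+αXY), X(1+αXY)/(1+βXY)), then U and V are independent with U ∼ GIG(−λ, αγ₂, γ₁) and V ∼ GIG(−λ, βγ₁, γ₂). -/
/-!
The map `T(x, y) = (y(1+βxy)/(1+αxy), x(1+αxy)/(1+βxy))` is an involution of the open quadrant
that preserves the product `xy` and has Jacobian determinant `-1`, so it preserves Lebesgue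
measure there. Since `uv = xy` and
`αγ₂u + γ₁/u + βγ₁v + γ₂/v = αγ₁x + γ₂/x + βγ₂y + γ₁/y` for `(u, v) = T(x, y)`,
the product of the densities of `X` and `Y` at `(x, y)` is the product of two GIG densities,
with swapped parameters, at `T(x, y)`. So the law of `(U, V)` is a product measure, which makes
`U` and `V` independent with GIG laws.
-/

open MeasureTheory ProbabilityTheory Set
open scoped ENNReal

/-- `μ` is the GIG(l, p, q) distribution on `(0,∞)`: density proportional to
`x^(l−1) e^(−px − q/x)` on `(0,∞)` w.r.t. Lebesgue measure. -/
noncomputable def IsGIG (μ : Measure ℝ) (l p q : ℝ) : Prop :=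
  ∃ C : ℝ, 0 < C ∧
    μ = volume.withDensity fun x =>
      if 0 < x then ENNReal.ofReal (C * x ^ (l - 1) * Real.exp (-(p * x) - q / x))
      else 0

section ChangeOfVariables

variable {α β : Type*} [MeasurableSpace α] [MeasurableSpace β]

theorem map_withDensity_comp (μ : Measure α) {T : α → β} (hT : Measurable T)
    {g : β → ℝ≥0∞} (hg : Measurable g) :
    (μ.withDensity (g ∘ T)).map T = (μ.map T).withDensity g := by
  ext A hA
  rw [Measure.map_apply hT hA, withDensity_apply _ (hT hA), withDensity_apply _ hA,
    setLIntegral_map hA hg hT, Function.comp_def]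

variable {E : Type*} [NormedAddCommGroup E] [NormedSpace ℝ E] [FiniteDimensional ℝ E]
  [MeasurableSpace E] [BorelSpace E] (μ : Measure E) [μ.IsAddHaarMeasure]
  {T : E → E} {T' : E → E →L[ℝ] E} {s : Set E}

theorem map_restrict_eq_of_leftInvOn_of_abs_det_eq_one (hs : MeasurableSet s)
    (hmaps : MapsTo T s s) (hinv : LeftInvOn T T s)
    (hT' : ∀ p ∈ s, HasFDerivWithinAt T (T' p) s p) (hdet : ∀ p ∈ s, |(T' p).det| = 1) :
    (μ.restrict s).map T = μ.restrict s := by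
  have himage : T '' s = s := hmaps.image_subset.antisymm (hinv.surjOn hmaps)
  have hone : (μ.restrict s).withDensity (fun p => ENNReal.ofReal |(T' p).det|)
      = μ.restrict s := by
    refine (withDensity_congr_ae (ae_restrict_of_forall_mem hs fun p hp => ?_)).trans
      withDensity_one
    simp [hdet p hp]
  conv_lhs => rw [← hone]
  rw [map_withDensity_abs_det_fderiv_eq_addHaar μ hs.nullMeasurableSet hT' hinv.injOn, himage]

theorem map_withDensity_indicator_comp (hs : MeasurableSet s) (hT : Measurable T)
    (hmaps : MapsTo T s s) (hinv : LeftInvOn T T s)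
    (hT' : ∀ p ∈ s, HasFDerivWithinAt T (T' p) s p) (hdet : ∀ p ∈ s, |(T' p).det| = 1)
    {g : E → ℝ≥0∞} (hg : Measurable g) :
    (μ.withDensity (s.indicator (g ∘ T))).map T = μ.withDensity (s.indicator g) := by
  rw [withDensity_indicator hs, withDensity_indicator hs, map_withDensity_comp _ hT hg,
    map_restrict_eq_of_leftInvOn_of_abs_det_eq_one μ hs hmaps hinv hT' hdet]

end ChangeOfVariables

section ProductLaw

variable {Ω α β : Type*} [MeasurableSpace Ω] [MeasurableSpace α] [MeasurableSpace β]
  {P : Measure Ω} [IsProbabilityMeasure P] {U : Ω → α} {V : Ω → β}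
  {μ : Measure α} {ν : Measure β} [SFinite ν]

theorem measure_univ_mul_measure_univ_of_map_eq_prod (hU : Measurable U) (hV : Measurable V)
    (h : P.map (fun ω => (U ω, V ω)) = μ.prod ν) : μ univ * ν univ = 1 := by
  rw [← Measure.prod_prod, univ_prod_univ, ← h, Measure.map_apply (hU.prodMk hV) .univ,
    preimage_univ, measure_univ]

theorem indepFun_and_map_eq_smul_of_map_eq_prod [SFinite μ] (hU : Measurable U) (hV : Measurable V)
    (h : P.map (fun ω => (U ω, V ω)) = μ.prod ν) :
    IndepFun U V P ∧ P.map U = ν univ • μ ∧ P.map V = μ univ • ν := by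
  have hmapU : P.map U = ν univ • μ := by
    rw [← Measure.map_fst_prod, ← h, Measure.map_map measurable_fst (hU.prodMk hV)]
    rfl
  have hmapV : P.map V = μ univ • ν := by
    rw [← Measure.map_snd_prod, ← h, Measure.map_map measurable_snd (hU.prodMk hV)]
    rfl
  refine ⟨?_, hmapU, hmapV⟩
  rw [indepFun_iff_map_prod_eq_prod_map_map hU.aemeasurable hV.aemeasurable, h, hmapU, hmapV,
    Measure.prod_smul_left, Measure.prod_smul_right, smul_smul, mul_comm,
    measure_univ_mul_measure_univ_of_map_eq_prod hU hV h, one_smul]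

end ProductLaw

noncomputable def gigDensity (C l p q x : ℝ) : ℝ≥0∞ :=
  if 0 < x then ENNReal.ofReal (C * x ^ (l - 1) * Real.exp (-(p * x) - q / x)) else 0

theorem isGIG_iff {μ : Measure ℝ} {l p q : ℝ} :
    IsGIG μ l p q ↔ ∃ C : ℝ, 0 < C ∧ μ = volume.withDensity (gigDensity C l p q) :=
  Iff.rfl

@[fun_prop]
theorem measurable_gigDensity (C l p q : ℝ) : Measurable (gigDensity C l p q) :=
  Measurable.ite measurableSet_Ioi (by fun_prop) measurable_const

theorem support_gigDensity_subset (C l p q : ℝ) :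
    Function.support (gigDensity C l p q) ⊆ Ioi 0 :=
  fun _ hx => by_contra fun h => hx (if_neg h)

theorem isGIG_smul_withDensity_gigDensity {C : ℝ} (hC : 0 < C) {r : ℝ≥0∞} (hr₀ : r ≠ 0)
    (hr : r ≠ ∞) (l p q : ℝ) :
    IsGIG (r • volume.withDensity (gigDensity C l p q)) l p q := by
  refine ⟨r.toReal * C, mul_pos (ENNReal.toReal_pos hr₀ hr) hC, ?_⟩
  rw [← withDensity_smul r (measurable_gigDensity C l p q)]
  congr 1
  funext x
  simp only [Pi.smul_apply, smul_eq_mul, gigDensity]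
  split_ifs
  · rw [mul_assoc r.toReal, mul_assoc r.toReal, ENNReal.ofReal_mul ENNReal.toReal_nonneg,
      ENNReal.ofReal_toReal hr]
  · exact mul_zero r

noncomputable def gigTransform (a b : ℝ) (p : ℝ × ℝ) : ℝ × ℝ :=
  (p.2 * (1 + b * p.1 * p.2) / (1 + a * p.1 * p.2),
    p.1 * (1 + a * p.1 * p.2) / (1 + b * p.1 * p.2))

theorem measurable_gigTransform (a b : ℝ) : Measurable (gigTransform a b) := by
  unfold gigTransform
  fun_prop

theorem gigTransform_fst_mul_snd {a b x y : ℝ} (hA : 1 + a * x * y ≠ 0)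
    (hB : 1 + b * x * y ≠ 0) :
    (gigTransform a b (x, y)).1 * (gigTransform a b (x, y)).2 = x * y := by
  simp only [gigTransform]
  rw [div_mul_div_comm, div_eq_iff (mul_ne_zero hA hB)]
  ring

theorem mapsTo_gigTransform {a b : ℝ} (ha : 0 ≤ a) (hb : 0 ≤ b) :
    MapsTo (gigTransform a b) (Ioi 0 ×ˢ Ioi 0) (Ioi 0 ×ˢ Ioi 0) := by
  rintro ⟨x, y⟩ ⟨hx, hy⟩
  simp only [mem_Ioi] at hx hy
  exact ⟨by simp only [gigTransform, mem_Ioi]; positivity,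
    by simp only [gigTransform, mem_Ioi]; positivity⟩

theorem leftInvOn_gigTransform {a b : ℝ} (ha : 0 ≤ a) (hb : 0 ≤ b) :
    LeftInvOn (gigTransform a b) (gigTransform a b) (Ioi 0 ×ˢ Ioi 0) := by
  rintro ⟨x, y⟩ ⟨hx, hy⟩
  simp only [mem_Ioi] at hx hy
  have hA : 1 + a * x * y ≠ 0 := by positivity
  have hB : 1 + b * x * y ≠ 0 := by positivity
  set u := y * (1 + b * x * y) / (1 + a * x * y) with hu
  set v := x * (1 + a * x * y) / (1 + b * x * y) with hv
  have hprod : u * v = x * y := gigTransform_fst_mul_snd hA hB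
  change gigTransform a b (u, v) = (x, y)
  simp only [gigTransform, mul_assoc b u, mul_assoc a u, hprod]
  rw [← mul_assoc a, ← mul_assoc b, hu, hv, Prod.mk.injEq]
  constructor <;> field_simp

noncomputable def gigTransformDeriv (a b : ℝ) (p : ℝ × ℝ) : ℝ × ℝ →L[ℝ] ℝ × ℝ :=
  (Matrix.toLin (Module.Basis.finTwoProd ℝ) (Module.Basis.finTwoProd ℝ)
    !![p.2 ^ 2 * (b - a) / (1 + a * p.1 * p.2) ^ 2,
        (1 + 2 * b * p.1 * p.2 + a * b * (p.1 * p.2) ^ 2) / (1 + a * p.1 * p.2) ^ 2;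
      (1 + 2 * a * p.1 * p.2 + a * b * (p.1 * p.2) ^ 2) / (1 + b * p.1 * p.2) ^ 2,
        p.1 ^ 2 * (a - b) / (1 + b * p.1 * p.2) ^ 2]).toContinuousLinearMap

-- With `s = xy`, `A = 1 + as`, `B = 1 + bs`:
-- `(1 + 2bs + abs²)(1 + 2as + abs²) = (AB)² - (a - b)²s²`.
theorem det_gigTransformDeriv {a b : ℝ} {p : ℝ × ℝ} (hA : 1 + a * p.1 * p.2 ≠ 0)
    (hB : 1 + b * p.1 * p.2 ≠ 0) : (gigTransformDeriv a b p).det = -1 := by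
  simp only [gigTransformDeriv, LinearMap.det_toContinuousLinearMap, LinearMap.det_toLin,
    Matrix.det_fin_two_of]
  rw [div_mul_div_comm, div_mul_div_comm, ← sub_div,
    div_eq_iff (mul_ne_zero (pow_ne_zero 2 hA) (pow_ne_zero 2 hB))]
  ring

theorem hasFDerivAt_gigTransform {a b : ℝ} {p : ℝ × ℝ} (hA : 1 + a * p.1 * p.2 ≠ 0)
    (hB : 1 + b * p.1 * p.2 ≠ 0) :
    HasFDerivAt (gigTransform a b) (gigTransformDeriv a b p) p := by
  obtain ⟨x, y⟩ := p
  have hfst := hasFDerivAt_fst (𝕜 := ℝ) (p := (x, y))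
  have hsnd := hasFDerivAt_snd (𝕜 := ℝ) (p := (x, y))
  have hDa := ((hfst.const_mul a).mul hsnd).const_add 1
  have hDb := ((hfst.const_mul b).mul hsnd).const_add 1
  have hIa := (hasDerivAt_inv hA).comp_hasFDerivAt (x, y) hDa
  have hIb := (hasDerivAt_inv hB).comp_hasFDerivAt (x, y) hDb
  have hT := ((hsnd.mul hDb).mul hIa).prodMk ((hfst.mul hDa).mul hIb)
  refine (hT.congr_fderiv ?_).congr_of_eventuallyEq (.of_forall fun q => ?_)
  · simp only [gigTransformDeriv, Matrix.toLin_finTwoProd_toContinuousLinearMap]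
    ext <;>
      simp only [Pi.mul_apply, smul_add, neg_smul, smul_neg, Function.comp_apply,
        ContinuousLinearMap.comp_apply, ContinuousLinearMap.inl_apply,
        ContinuousLinearMap.inr_apply, ContinuousLinearMap.prod_apply, add_apply, neg_apply,
        smul_apply, ContinuousLinearMap.coe_fst', ContinuousLinearMap.coe_snd', smul_eq_mul,
        mul_zero, mul_one, neg_zero, zero_add, add_zero] <;>
      field_simp <;> ring
  · simp only [gigTransform, div_eq_mul_inv, Function.comp_apply, Pi.mul_apply]

theorem gigDensity_mul_gigDensity_gigTransform {a b x y : ℝ} (ha : 0 ≤ a) (hb : 0 ≤ b)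
    (hx : 0 < x) (hy : 0 < y) {C₁ C₂ : ℝ} (hC₁ : 0 ≤ C₁) (l γ₁ γ₂ : ℝ) :
    gigDensity C₁ l (a * γ₂) γ₁ (gigTransform a b (x, y)).1 *
        gigDensity C₂ l (b * γ₁) γ₂ (gigTransform a b (x, y)).2 =
      gigDensity C₁ l (a * γ₁) γ₂ x * gigDensity C₂ l (b * γ₂) γ₁ y := by
  have hA : 0 < 1 + a * x * y := by positivity
  have hB : 0 < 1 + b * x * y := by positivity
  set u := y * (1 + b * x * y) / (1 + a * x * y) with hu
  set v := x * (1 + a * x * y) / (1 + b * x * y) with hv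
  have hu₀ : 0 < u := by positivity
  have hv₀ : 0 < v := by positivity
  have hprod : u * v = x * y := gigTransform_fst_mul_snd hA.ne' hB.ne'
  have hexp : (-(a * γ₂ * u) - γ₁ / u) + (-(b * γ₁ * v) - γ₂ / v)
      = (-(a * γ₁ * x) - γ₂ / x) + (-(b * γ₂ * y) - γ₁ / y) := by
    rw [hu, hv]
    field_simp
    ring
  change gigDensity C₁ l (a * γ₂) γ₁ u * gigDensity C₂ l (b * γ₁) γ₂ v = _
  simp only [gigDensity, if_pos hu₀, if_pos hv₀, if_pos hx, if_pos hy]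
  rw [← ENNReal.ofReal_mul (by positivity), ← ENNReal.ofReal_mul (by positivity)]
  congr 1
  calc C₁ * u ^ (l - 1) * Real.exp (-(a * γ₂ * u) - γ₁ / u)
        * (C₂ * v ^ (l - 1) * Real.exp (-(b * γ₁ * v) - γ₂ / v))
      = C₁ * C₂ * (u * v) ^ (l - 1)
          * Real.exp ((-(a * γ₂ * u) - γ₁ / u) + (-(b * γ₁ * v) - γ₂ / v)) := by
        rw [Real.mul_rpow hu₀.le hv₀.le, Real.exp_add]; ring
    _ = C₁ * C₂ * (x * y) ^ (l - 1)
          * Real.exp ((-(a * γ₁ * x) - γ₂ / x) + (-(b * γ₂ * y) - γ₁ / y)) := by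
        rw [hprod, hexp]
    _ = C₁ * x ^ (l - 1) * Real.exp (-(a * γ₁ * x) - γ₂ / x)
          * (C₂ * y ^ (l - 1) * Real.exp (-(b * γ₂ * y) - γ₁ / y)) := by
        rw [Real.mul_rpow hx.le hy.le, Real.exp_add]; ring

theorem map_gigTransform_prod_withDensity_gigDensity {a b : ℝ} (ha : 0 ≤ a) (hb : 0 ≤ b)
    {C₁ C₂ : ℝ} (hC₁ : 0 ≤ C₁) (l γ₁ γ₂ : ℝ) :
    ((volume.withDensity (gigDensity C₁ l (a * γ₁) γ₂)).prod
        (volume.withDensity (gigDensity C₂ l (b * γ₂) γ₁))).map (gigTransform a b) =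
      (volume.withDensity (gigDensity C₁ l (a * γ₂) γ₁)).prod
        (volume.withDensity (gigDensity C₂ l (b * γ₁) γ₂)) := by
  set Q : Set (ℝ × ℝ) := Ioi 0 ×ˢ Ioi 0
  have hQ : MeasurableSet Q := measurableSet_Ioi.prod measurableSet_Ioi
  have hpos : ∀ {c : ℝ}, 0 ≤ c → ∀ p ∈ Q, 1 + c * p.1 * p.2 ≠ 0 :=
    fun hc p ⟨(hx : 0 < p.1), (hy : 0 < p.2)⟩ => by positivity
  have hT' : ∀ p ∈ Q, HasFDerivWithinAt (gigTransform a b) (gigTransformDeriv a b p) Q p :=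
    fun p hp => (hasFDerivAt_gigTransform (hpos ha p hp) (hpos hb p hp)).hasFDerivWithinAt
  have hdet : ∀ p ∈ Q, |(gigTransformDeriv a b p).det| = 1 := fun p hp => by
    rw [det_gigTransformDeriv (hpos ha p hp) (hpos hb p hp), abs_neg, abs_one]
  have hsupp : ∀ C C' p q p' q' : ℝ,
      Q.indicator (fun z => gigDensity C l p q z.1 * gigDensity C' l p' q' z.2) =
        fun z => gigDensity C l p q z.1 * gigDensity C' l p' q' z.2 := fun C C' p q p' q' =>
    indicator_eq_self.2 fun z hz =>
      ⟨support_gigDensity_subset _ _ _ _ (left_ne_zero_of_mul hz),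
        support_gigDensity_subset _ _ _ _ (right_ne_zero_of_mul hz)⟩
  set G : ℝ × ℝ → ℝ≥0∞ := fun z =>
    gigDensity C₁ l (a * γ₂) γ₁ z.1 * gigDensity C₂ l (b * γ₁) γ₂ z.2
  have hdens : (fun z : ℝ × ℝ =>
        gigDensity C₁ l (a * γ₁) γ₂ z.1 * gigDensity C₂ l (b * γ₂) γ₁ z.2)
      = Q.indicator (G ∘ gigTransform a b) := by
    rw [← hsupp]
    exact indicator_congr fun z hz =>
      (gigDensity_mul_gigDensity_gigTransform ha hb hz.1 hz.2 hC₁ l γ₁ γ₂).symm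
  rw [prod_withDensity (measurable_gigDensity _ _ _ _) (measurable_gigDensity _ _ _ _),
    prod_withDensity (measurable_gigDensity _ _ _ _) (measurable_gigDensity _ _ _ _),
    ← Measure.volume_eq_prod, hdens, ← hsupp]
  exact map_withDensity_indicator_comp volume hQ (measurable_gigTransform a b)
    (mapsTo_gigTransform ha hb) (leftInvOn_gigTransform ha hb) hT' hdet (by fun_prop)

theorem gig_independence_preserving_general
    {Ω : Type*} [MeasurableSpace Ω] (P : Measure Ω) [IsProbabilityMeasure P]
    (l α β γ₁ γ₂ : ℝ) (hα : 0 < α) (hβ : 0 < β)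
    (X Y : Ω → ℝ) (hX : Measurable X) (hY : Measurable Y)
    (hind : IndepFun X Y P)
    (hXlaw : IsGIG (P.map X) (-l) (α * γ₁) γ₂)
    (hYlaw : IsGIG (P.map Y) (-l) (β * γ₂) γ₁)
    (U V : Ω → ℝ)
    (hU : U = fun ω => Y ω * (1 + β * X ω * Y ω) / (1 + α * X ω * Y ω))
    (hV : V = fun ω => X ω * (1 + α * X ω * Y ω) / (1 + β * X ω * Y ω)) :
    IndepFun U V P ∧ IsGIG (P.map U) (-l) (α * γ₂) γ₁ ∧
      IsGIG (P.map V) (-l) (β * γ₁) γ₂ := by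
  obtain ⟨C₁, hC₁, hXlaw⟩ := isGIG_iff.1 hXlaw
  obtain ⟨C₂, hC₂, hYlaw⟩ := isGIG_iff.1 hYlaw
  have hUV : (fun ω => (U ω, V ω)) = gigTransform α β ∘ fun ω => (X ω, Y ω) := by
    subst hU hV
    rfl
  have hUVm : Measurable fun ω => (U ω, V ω) :=
    hUV ▸ (measurable_gigTransform α β).comp (hX.prodMk hY)
  have hlaw : P.map (fun ω => (U ω, V ω)) =
      (volume.withDensity (gigDensity C₁ (-l) (α * γ₂) γ₁)).prod
        (volume.withDensity (gigDensity C₂ (-l) (β * γ₁) γ₂)) := by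
    rw [hUV, ← Measure.map_map (measurable_gigTransform α β) (hX.prodMk hY),
      (indepFun_iff_map_prod_eq_prod_map_map hX.aemeasurable hY.aemeasurable).1 hind, hXlaw, hYlaw,
      map_gigTransform_prod_withDensity_gigDensity hα.le hβ.le hC₁.le]
  obtain ⟨hindUV, hmapU, hmapV⟩ :=
    indepFun_and_map_eq_smul_of_map_eq_prod hUVm.fst hUVm.snd hlaw
  have hmass := measure_univ_mul_measure_univ_of_map_eq_prod hUVm.fst hUVm.snd hlaw
  have hfin : _ * _ ≠ ∞ := hmass ▸ ENNReal.one_ne_top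
  have hμ₀ := left_ne_zero_of_mul_eq_one hmass
  have hν₀ := right_ne_zero_of_mul_eq_one hmass
  refine ⟨hindUV, hmapU ▸ ?_, hmapV ▸ ?_⟩
  · exact isGIG_smul_withDensity_gigDensity hC₁ hν₀
      (ENNReal.lt_top_of_mul_ne_top_right hfin hμ₀).ne _ _ _
  · exact isGIG_smul_withDensity_gigDensity hC₂ hμ₀
      (ENNReal.lt_top_of_mul_ne_top_left hfin hν₀).ne _ _ _

/-- If `X ∼ GIG(−l, αγ₁, γ₂)` and `Y ∼ GIG(−l, βγ₂, γ₁)` are independent and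
`(U,V) = (Y(1+βXY)/(1+αXY), X(1+αXY)/(1+βXY))`, then `U` and `V` are
independent with `U ∼ GIG(−l, αγ₂, γ₁)` and `V ∼ GIG(−l, βγ₁, γ₂)`. -/
theorem gig_independence_preserving
    {Ω : Type*} [MeasurableSpace Ω] (P : Measure Ω) [IsProbabilityMeasure P]
    (l α β γ₁ γ₂ : ℝ) (hα : 0 < α) (hβ : 0 < β) (hγ₁ : 0 < γ₁) (hγ₂ : 0 < γ₂)
    (X Y : Ω → ℝ) (hX : Measurable X) (hY : Measurable Y)
    (hind : IndepFun X Y P)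
    (hXlaw : IsGIG (P.map X) (-l) (α * γ₁) γ₂)
    (hYlaw : IsGIG (P.map Y) (-l) (β * γ₂) γ₁)
    (U V : Ω → ℝ)
    (hU : U = fun ω => Y ω * (1 + β * X ω * Y ω) / (1 + α * X ω * Y ω))
    (hV : V = fun ω => X ω * (1 + α * X ω * Y ω) / (1 + β * X ω * Y ω)) :
    IndepFun U V P ∧ IsGIG (P.map U) (-l) (α * γ₂) γ₁ ∧
      IsGIG (P.map V) (-l) (β * γ₁) γ₂ :=
  gig_independence_preserving_general P l α β γ₁ γ₂ hα hβ X Y hX hY hind hXlaw hYlaw U V hU hV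
end

section
/- If a, b, c are symmetric positive definite real matrices of the same dimension and the product abc is symmetric, then abc is positive definite. -/
/-!
Write `a = s * s` with `s = √a`. Conjugating by `s⁻¹` turns `a * b * c` into the product of the
two positive definite matrices `s * b * s` and `s⁻¹ * c * s⁻¹`, and this product is still
symmetric. Two strictly positive elements whose product is self-adjoint commute, and the product
of commuting strictly positive elements is strictly positive; conjugating back by `s` finishes.
-/

open scoped MatrixOrder

section StrictlyPositive

variable {A : Type*} [Ring A] [PartialOrder A] [StarRing A] [StarOrderedRing A]
  [TopologicalSpace A] [Algebra ℝ A] [ContinuousFunctionalCalculus ℝ A IsSelfAdjoint]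
  [NonnegSpectrumClass ℝ A]

theorem IsStrictlyPositive.mul_of_isSelfAdjoint {a b : A} (ha : IsStrictlyPositive a)
    (hb : IsStrictlyPositive b) (hab : IsSelfAdjoint (a * b)) : IsStrictlyPositive (a * b) :=
  (ha.commute_iff hb).mp ((ha.isSelfAdjoint.commute_iff hb.isSelfAdjoint).mpr hab)

theorem isStrictlyPositive_mul_self_mul_mul {s b c : A} (hs : IsUnit s) (hs' : IsSelfAdjoint s)
    (hb : IsStrictlyPositive b) (hc : IsStrictlyPositive c) (h : IsSelfAdjoint (s * s * b * c)) :
    IsStrictlyPositive (s * s * b * c) := by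
  lift s to Aˣ using hs
  have hinv : IsSelfAdjoint (↑s⁻¹ : A) := by
    rw [isSelfAdjoint_iff, ← Units.coe_star_inv, show star s = s from Units.ext hs'.star_eq]
  have hsplit : (s * b * s) * (↑s⁻¹ * c * ↑s⁻¹) = ↑s⁻¹ * (s * s * b * c) * ↑s⁻¹ := by
    simp [mul_assoc]
  rw [← (s⁻¹).isUnit.isStrictlyPositive_iff_conjugate_of_isSelfAdjoint _ _ hinv, ← hsplit]
  exact (hb.conjugate_of_isUnit_of_isSelfAdjoint _ _ s.isUnit hs').mul_of_isSelfAdjoint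
    (hc.conjugate_of_isUnit_of_isSelfAdjoint _ _ (s⁻¹).isUnit hinv) (hsplit ▸ h.conjugate_self hinv)

variable [IsSemitopologicalRing A] [T2Space A]

theorem IsStrictlyPositive.mul_mul_of_isSelfAdjoint {a b c : A} (ha : IsStrictlyPositive a)
    (hb : IsStrictlyPositive b) (hc : IsStrictlyPositive c) (h : IsSelfAdjoint (a * b * c)) :
    IsStrictlyPositive (a * b * c) := by
  have hsqrt := ha.sqrt
  rw [← CFC.sqrt_mul_sqrt_self a] at h ⊢
  exact isStrictlyPositive_mul_self_mul_mul hsqrt.isUnit hsqrt.isSelfAdjoint hb hc h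

end StrictlyPositive

theorem Matrix.isSelfAdjoint_iff_isSymm {n α : Type*} [Star α] [TrivialStar α]
    {M : Matrix n n α} : IsSelfAdjoint M ↔ M.IsSymm := by
  rw [isSelfAdjoint_iff, star_eq_conjTranspose, conjTranspose_eq_transpose_of_trivial, IsSymm]

/-- Wigner's theorem: if `a`, `b`, `c` are real symmetric positive definite
matrices of the same dimension and the product `a * b * c` is symmetric,
then `a * b * c` is positive definite. -/
theorem posDef_of_symm_triple_product {r : ℕ}
    (a b c : Matrix (Fin r) (Fin r) ℝ)
    (ha : a.PosDef) (hb : b.PosDef) (hc : c.PosDef)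
    (h : (a * b * c).IsSymm) :
    (a * b * c).PosDef :=
  Matrix.IsStrictlyPositive.posDef <|
    ha.isStrictlyPositive.mul_mul_of_isSelfAdjoint hb.isStrictlyPositive hc.isStrictlyPositive
      (Matrix.isSelfAdjoint_iff_isSymm.mpr h)
end

section
/- The map ψ(x,y) = ((αx+y)⁻¹(βx+y)y⁻¹, (αx+y)⁻¹(βx+y)x⁻¹) on pairs of symmetric positive definite matrices is an involution: ψ(ψ(x,y)) = (x,y). -/
/-!
Write `A = αx + y`, `B = βx + y` and `Q = A⁻¹B`, so that `ψ(x, y) = (Qy⁻¹, Qx⁻¹)`. Then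
`αQy⁻¹ + Qx⁻¹ = Qx⁻¹Ay⁻¹` and `βQy⁻¹ + Qx⁻¹ = Qx⁻¹By⁻¹`, so applying `ψ` again gives
`(yQy⁻¹xQ⁻¹, y)`. Finally `Q = (y⁻¹A)⁻¹(y⁻¹B)` with `y⁻¹A = α y⁻¹x + 1` and `y⁻¹B = β y⁻¹x + 1`,
so `Q` commutes with `y⁻¹x` and `yQy⁻¹xQ⁻¹ = x`.
-/

/-- The map `ψ(x,y) = ((αx+y)⁻¹(βx+y)y⁻¹, (αx+y)⁻¹(βx+y)x⁻¹)` on pairs of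
matrices. -/
noncomputable def psiMap {r : ℕ} (α β : ℝ)
    (p : Matrix (Fin r) (Fin r) ℝ × Matrix (Fin r) (Fin r) ℝ) :
    Matrix (Fin r) (Fin r) ℝ × Matrix (Fin r) (Fin r) ℝ :=
  ((α • p.1 + p.2)⁻¹ * (β • p.1 + p.2) * p.2⁻¹,
   (α • p.1 + p.2)⁻¹ * (β • p.1 + p.2) * p.1⁻¹)

namespace Ring

variable {𝕜 R : Type*} [CommSemiring 𝕜] [Semiring R] [Algebra 𝕜 R]

noncomputable def psiMap (α β : 𝕜) (p : R × R) : R × R :=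
  (Ring.inverse (α • p.1 + p.2) * (β • p.1 + p.2) * Ring.inverse p.2,
   Ring.inverse (α • p.1 + p.2) * (β • p.1 + p.2) * Ring.inverse p.1)

theorem psiMap_units {α β : 𝕜} {X Y A B : Rˣ} (hA : (A : R) = α • X + Y)
    (hB : (B : R) = β • X + Y) :
    psiMap α β ((X : R), (Y : R)) = (↑(A⁻¹ * B * Y⁻¹), ↑(A⁻¹ * B * X⁻¹)) := by
  simp [psiMap, ← hA, ← hB]

theorem val_mul_inv_mul_mul_inv {α : 𝕜} {X Y A : Rˣ} (hA : (A : R) = α • X + Y) (Z : Rˣ) :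
    (↑(Z * X⁻¹ * A * Y⁻¹) : R) = α • ↑(Z * Y⁻¹) + ↑(Z * X⁻¹) := by
  simp only [Units.val_mul, hA, mul_add, add_mul, mul_smul_comm, smul_mul_assoc, mul_assoc,
    Units.inv_mul_cancel_left, Units.mul_inv, mul_one]

theorem commute_inv_mul_inv_mul {α β : 𝕜} {X Y A B : Rˣ} (hA : (A : R) = α • X + Y)
    (hB : (B : R) = β • X + Y) : Commute (A⁻¹ * B) (Y⁻¹ * X) := by
  have affine_commute : ∀ {γ : 𝕜} {C : Rˣ}, (C : R) = γ • X + Y →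
      Commute (Y⁻¹ * C) (Y⁻¹ * X) := by
    intro γ C hC
    have hC' : (↑(Y⁻¹ * C) : R) = γ • ↑(Y⁻¹ * X) + 1 := by
      simp only [Units.val_mul, hC, mul_add, mul_smul_comm, Units.inv_mul]
    rw [← Commute.units_val_iff, hC']
    exact ((Commute.refl _).smul_left γ).add_left (Commute.one_left _)
  have hQ : A⁻¹ * B = (Y⁻¹ * A)⁻¹ * (Y⁻¹ * B) := by group
  rw [hQ]
  exact (affine_commute hA).inv_left.mul_left (affine_commute hB)

theorem psiMap_psiMap {α β : 𝕜} {x y : R} (hx : IsUnit x) (hy : IsUnit y)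
    (hA : IsUnit (α • x + y)) (hB : IsUnit (β • x + y)) :
    psiMap α β (psiMap α β (x, y)) = (x, y) := by
  obtain ⟨X, rfl⟩ := hx
  obtain ⟨Y, rfl⟩ := hy
  obtain ⟨A, hA⟩ := hA
  obtain ⟨B, hB⟩ := hB
  rw [psiMap_units hA hB, psiMap_units (val_mul_inv_mul_mul_inv hA (A⁻¹ * B))
    (val_mul_inv_mul_mul_inv hB (A⁻¹ * B)), Prod.mk.injEq, Units.val_inj, Units.val_inj]
  refine ⟨?_, by group⟩
  calc _ = Y * (A⁻¹ * B * (Y⁻¹ * X)) * (A⁻¹ * B)⁻¹ := by group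
    _ = Y * (Y⁻¹ * X * (A⁻¹ * B)) * (A⁻¹ * B)⁻¹ := by rw [(commute_inv_mul_inv_mul hA hB).eq]
    _ = X := by group

end Ring

theorem psiMap_eq_ringPsiMap {r : ℕ} (α β : ℝ) :
    psiMap (r := r) α β = Ring.psiMap α β := by
  ext1 p
  simp only [psiMap, Ring.psiMap, Matrix.nonsing_inv_eq_ringInverse]

/-- `ψ` is an involution on pairs of symmetric positive definite matrices. -/
theorem psiMap_involution {r : ℕ} (α β : ℝ) (hα : 0 < α) (hβ : 0 ≤ β)
    (x y : Matrix (Fin r) (Fin r) ℝ) (hx : x.PosDef) (hy : y.PosDef) :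
    psiMap α β (psiMap α β (x, y)) = (x, y) := by
  have hA : (α • x + y).PosDef := (hx.smul hα).add hy
  have hB : (β • x + y).PosDef := Matrix.PosDef.posSemidef_add (hx.posSemidef.smul hβ) hy
  rw [psiMap_eq_ringPsiMap]
  exact Ring.psiMap_psiMap hx.isUnit hy.isUnit hA.isUnit hB.isUnit
end

section
/- The map φ(x,y) = (y(I+αxy)⁻¹(I+βxy), x(I+βyx)⁻¹(I+αyx)) on pairs of symmetric positive definite r×r matrices is an involution: φ(φ(x,y)) = (x,y). -/
/-!
Write `P c = 1 + c • (x * y)` and `P' c = 1 + c • (y * x)`; then `P c * x = x * P' c`.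
For `(u, v) = φ (x, y)` this collapses the products to `u * v = y * x` and `v * u = x * y`,
so the second application of `φ` brings in the factors `P' α`, `P' β`, `P β`, `P α`, which
cancel against those of the first one. Positive definiteness is only needed to make the
four factors invertible, through `1 + c • (x * y) = x * (x⁻¹ + c • y)`.
-/

/-- The map `φ(x,y) = (y(I+αxy)⁻¹(I+βxy), x(I+βyx)⁻¹(I+αyx))` on pairs of
matrices. -/
noncomputable def phiMap {r : ℕ} (α β : ℝ)
    (p : Matrix (Fin r) (Fin r) ℝ × Matrix (Fin r) (Fin r) ℝ) :
    Matrix (Fin r) (Fin r) ℝ × Matrix (Fin r) (Fin r) ℝ :=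
  (p.2 * (1 + α • (p.1 * p.2))⁻¹ * (1 + β • (p.1 * p.2)),
   p.1 * (1 + β • (p.2 * p.1))⁻¹ * (1 + α • (p.2 * p.1)))

section

variable {R A : Type*} [CommSemiring R] [Semiring A] [Algebra R A]

noncomputable def algebraPhiMap (a b : R) (p : A × A) : A × A :=
  (p.2 * Ring.inverse (1 + a • (p.1 * p.2)) * (1 + b • (p.1 * p.2)),
   p.1 * Ring.inverse (1 + b • (p.2 * p.1)) * (1 + a • (p.2 * p.1)))

theorem one_add_smul_mul_mul_comm (c : R) (x y : A) :
    (1 + c • (x * y)) * x = x * (1 + c • (y * x)) := by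
  rw [add_mul, mul_add, one_mul, mul_one, smul_mul_assoc, mul_smul_comm, mul_assoc]

variable {a b : R} {x y : A}

theorem algebraPhiMap_fst_mul_snd (ha : IsUnit (1 + a • (x * y)))
    (hb : IsUnit (1 + b • (y * x))) :
    (algebraPhiMap a b (x, y)).1 * (algebraPhiMap a b (x, y)).2 = y * x := by
  simp only [algebraPhiMap]
  calc y * Ring.inverse (1 + a • (x * y)) * (1 + b • (x * y)) *
        (x * Ring.inverse (1 + b • (y * x)) * (1 + a • (y * x)))
      = y * Ring.inverse (1 + a • (x * y)) * ((1 + b • (x * y)) * x) *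
          Ring.inverse (1 + b • (y * x)) * (1 + a • (y * x)) := by simp only [mul_assoc]
    _ = y * Ring.inverse (1 + a • (x * y)) * x *
          ((1 + b • (y * x)) * Ring.inverse (1 + b • (y * x))) * (1 + a • (y * x)) := by
        rw [one_add_smul_mul_mul_comm]; simp only [mul_assoc]
    _ = y * (Ring.inverse (1 + a • (x * y)) * (1 + a • (x * y))) * x := by
        rw [Ring.mul_inverse_cancel _ hb, mul_one, mul_assoc _ x, ← one_add_smul_mul_mul_comm]
        simp only [mul_assoc]
    _ = y * x := by rw [Ring.inverse_mul_cancel _ ha, mul_one]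

theorem algebraPhiMap_snd_mul_fst (ha : IsUnit (1 + a • (x * y)))
    (hb : IsUnit (1 + b • (y * x))) :
    (algebraPhiMap a b (x, y)).2 * (algebraPhiMap a b (x, y)).1 = x * y := by
  simp only [algebraPhiMap]
  calc x * Ring.inverse (1 + b • (y * x)) * (1 + a • (y * x)) *
        (y * Ring.inverse (1 + a • (x * y)) * (1 + b • (x * y)))
      = x * Ring.inverse (1 + b • (y * x)) * ((1 + a • (y * x)) * y) *
          Ring.inverse (1 + a • (x * y)) * (1 + b • (x * y)) := by simp only [mul_assoc]
    _ = x * Ring.inverse (1 + b • (y * x)) * y *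
          ((1 + a • (x * y)) * Ring.inverse (1 + a • (x * y))) * (1 + b • (x * y)) := by
        rw [one_add_smul_mul_mul_comm]; simp only [mul_assoc]
    _ = x * (Ring.inverse (1 + b • (y * x)) * (1 + b • (y * x))) * y := by
        rw [Ring.mul_inverse_cancel _ ha, mul_one, mul_assoc _ y, ← one_add_smul_mul_mul_comm]
        simp only [mul_assoc]
    _ = x * y := by rw [Ring.inverse_mul_cancel _ hb, mul_one]

theorem algebraPhiMap_algebraPhiMap (hxy_a : IsUnit (1 + a • (x * y)))
    (hxy_b : IsUnit (1 + b • (x * y))) (hyx_a : IsUnit (1 + a • (y * x)))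
    (hyx_b : IsUnit (1 + b • (y * x))) :
    algebraPhiMap a b (algebraPhiMap a b (x, y)) = (x, y) := by
  have huv := algebraPhiMap_fst_mul_snd hxy_a hyx_b
  have hvu := algebraPhiMap_snd_mul_fst hxy_a hyx_b
  rw [algebraPhiMap, huv, hvu]
  simp only [algebraPhiMap, Prod.mk.injEq, mul_assoc]
  rw [Ring.mul_inverse_cancel_left _ _ hyx_a, Ring.inverse_mul_cancel _ hyx_b,
    Ring.mul_inverse_cancel_left _ _ hxy_b, Ring.inverse_mul_cancel _ hxy_a]
  exact ⟨mul_one x, mul_one y⟩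

end

theorem Matrix.isUnit_one_add_smul_mul_of_posDef {n K : Type*} [Fintype n] [DecidableEq n]
    [Field K] [PartialOrder K] [StarRing K] [StarOrderedRing K]
    {c : K} (hc : 0 ≤ c) {x y : Matrix n n K} (hx : x.PosDef) (hy : y.PosSemidef) :
    IsUnit (1 + c • (x * y)) := by
  have hfactor : 1 + c • (x * y) = x * (x⁻¹ + c • y) := by
    rw [Matrix.mul_add, mul_smul_comm,
      Matrix.mul_nonsing_inv _ ((Matrix.isUnit_iff_isUnit_det x).mp hx.isUnit)]
  rw [hfactor]
  exact hx.isUnit.mul (hx.inv.add_posSemidef (hy.smul hc)).isUnit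

theorem phiMap_eq_algebraPhiMap {r : ℕ} (α β : ℝ)
    (p : Matrix (Fin r) (Fin r) ℝ × Matrix (Fin r) (Fin r) ℝ) :
    phiMap α β p = algebraPhiMap α β p := by
  simp only [phiMap, algebraPhiMap, Matrix.nonsing_inv_eq_ringInverse]

/-- `φ` is an involution on pairs of symmetric positive definite matrices. -/
theorem phiMap_involution {r : ℕ} (α β : ℝ) (hα : 0 ≤ α) (hβ : 0 ≤ β)
    (x y : Matrix (Fin r) (Fin r) ℝ) (hx : x.PosDef) (hy : y.PosDef) :
    phiMap α β (phiMap α β (x, y)) = (x, y) := by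
  rw [phiMap_eq_algebraPhiMap, phiMap_eq_algebraPhiMap]
  exact algebraPhiMap_algebraPhiMap
    (Matrix.isUnit_one_add_smul_mul_of_posDef hα hx hy.posSemidef)
    (Matrix.isUnit_one_add_smul_mul_of_posDef hβ hx hy.posSemidef)
    (Matrix.isUnit_one_add_smul_mul_of_posDef hα hy hx.posSemidef)
    (Matrix.isUnit_one_add_smul_mul_of_posDef hβ hy hx.posSemidef)
end

section
/- The map φ(x,y) = (y(I+αxy)⁻¹(I+βxy), x(I+βyx)⁻¹(I+αyx)) maps pairs of symmetric positive definite matrices to pairs of symmetric positive definite matrices; in particular both components are symmetric. -/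
/-!
Writing `B = y⁻¹ + αx` and `C = y⁻¹ + βx`, one has `I + αxy = B y` and `I + βxy = C y`, so the first
component equals `B⁻¹ C y = B⁻¹ (C y B) B⁻¹`. The middle factor expands to
`y⁻¹ + (α + β) x + αβ xyx`, which is positive definite, and a congruence by the Hermitian matrix
`B⁻¹` preserves positive definiteness. The second component is the first with the roles of
`(x, α)` and `(y, β)` exchanged.
-/

open scoped ComplexOrder

namespace Matrix

section Algebra

variable {n R S : Type*} [Fintype n] [DecidableEq n] [CommRing R]
  [CommSemiring S] [Module S R] [IsScalarTower S R R]

theorem one_add_smul_mul_eq {y : Matrix n n R} (hy : IsUnit y.det) (a : S)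
    (x : Matrix n n R) : 1 + a • (x * y) = (y⁻¹ + a • x) * y := by
  rw [add_mul, nonsing_inv_mul y hy, smul_mul_assoc]

theorem mul_inv_one_add_smul_mul {y : Matrix n n R} (hy : IsUnit y.det) (a : S)
    (x : Matrix n n R) : y * (1 + a • (x * y))⁻¹ = (y⁻¹ + a • x)⁻¹ := by
  rw [one_add_smul_mul_eq hy, mul_inv_rev, ← mul_assoc, mul_nonsing_inv y hy, one_mul]

theorem inv_add_smul_mul_mul_inv_add_smul [SMulCommClass S R R] {y : Matrix n n R}
    (hy : IsUnit y.det) (a b : S) (x : Matrix n n R) :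
    (y⁻¹ + b • x) * y * (y⁻¹ + a • x) = y⁻¹ + (a + b) • x + (a * b) • (x * y * x) := by
  simp only [add_mul, mul_add, Matrix.smul_mul, Matrix.mul_smul, smul_smul, mul_assoc,
    nonsing_inv_mul y hy, mul_nonsing_inv y hy, mul_one, one_mul]
  module

end Algebra

section RCLike

variable {n 𝕜 : Type*} [Fintype n] [DecidableEq n] [RCLike 𝕜] {x y : Matrix n n 𝕜}

theorem posDef_inv_add_smul_mul_mul_inv_add_smul (hy : y.PosDef) (hx : x.PosSemidef) {a b : ℝ}
    (ha : 0 ≤ a) (hb : 0 ≤ b) : ((y⁻¹ + b • x) * y * (y⁻¹ + a • x)).PosDef := by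
  have hxyx : (x * y * x).PosSemidef := by
    simpa only [hx.isHermitian.eq] using hy.posSemidef.conjTranspose_mul_mul_same x
  rw [inv_add_smul_mul_mul_inv_add_smul hy.det_pos.ne'.isUnit]
  exact (hy.inv.add_posSemidef (hx.smul (add_nonneg ha hb))).add_posSemidef
    (hxyx.smul (mul_nonneg ha hb))

theorem PosDef.mul_inv_one_add_smul_mul_mul_one_add_smul_mul (hy : y.PosDef) (hx : x.PosSemidef)
    {a b : ℝ} (ha : 0 ≤ a) (hb : 0 ≤ b) :
    (y * (1 + a • (x * y))⁻¹ * (1 + b • (x * y))).PosDef := by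
  have hydet : IsUnit y.det := hy.det_pos.ne'.isUnit
  set B := y⁻¹ + a • x with hBdef
  have hB : B.PosDef := hy.inv.add_posSemidef (hx.smul ha)
  have hBdet : IsUnit B.det := hB.det_pos.ne'.isUnit
  have hconj : y * (1 + a • (x * y))⁻¹ * (1 + b • (x * y)) =
      star B⁻¹ * ((y⁻¹ + b • x) * y * B) * B⁻¹ := by
    rw [mul_inv_one_add_smul_mul hydet, one_add_smul_mul_eq hydet, ← hBdef, star_eq_conjTranspose,
      hB.inv.isHermitian.eq, mul_assoc B⁻¹, mul_assoc _ B, mul_nonsing_inv B hBdet, mul_one]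
  rw [hconj, IsUnit.posDef_star_left_conjugate_iff hB.inv.isUnit]
  exact posDef_inv_add_smul_mul_mul_inv_add_smul hy hx ha hb

end RCLike

end Matrix

/-- The map `φ(x,y) = (y(I+αxy)⁻¹(I+βxy), x(I+βyx)⁻¹(I+αyx))` maps pairs of
symmetric positive definite matrices to pairs of symmetric positive definite
matrices; in particular both components are symmetric. -/
theorem phiMap_posDef {r : ℕ} (α β : ℝ) (hα : 0 ≤ α) (hβ : 0 ≤ β)
    (x y : Matrix (Fin r) (Fin r) ℝ) (hx : x.PosDef) (hy : y.PosDef) :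
    (y * (1 + α • (x * y))⁻¹ * (1 + β • (x * y))).PosDef ∧
    (y * (1 + α • (x * y))⁻¹ * (1 + β • (x * y))).IsSymm ∧
    (x * (1 + β • (y * x))⁻¹ * (1 + α • (y * x))).PosDef ∧
    (x * (1 + β • (y * x))⁻¹ * (1 + α • (y * x))).IsSymm := by
  have h₁ := hy.mul_inv_one_add_smul_mul_mul_one_add_smul_mul hx.posSemidef hα hβ
  have h₂ := hx.mul_inv_one_add_smul_mul_mul_one_add_smul_mul hy.posSemidef hβ hα
  exact ⟨h₁, Matrix.isHermitian_iff_isSymm.mp h₁.isHermitian,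
    h₂, Matrix.isHermitian_iff_isSymm.mp h₂.isHermitian⟩
end

section
/- The scalar parametric map φ^(α,β)(x,y) = (y(1+βxy)/(1+αxy), x(1+αxy)/(1+βxy)) on (0,∞)² satisfies the parametric Yang–Baxter equation: F₁₂^(α,β) ∘ F₁₃^(α,γ) ∘ F₂₃^(β,γ) = F₂₃^(β,γ) ∘ F₁₃^(α,γ) ∘ F₁₂^(α,β) as maps on (0,∞)³, where F_{ij} applies φ with the corresponding parameters to the i-th and j-th coordinates. -/
/-- The scalar parametric map `φ^(α,β)(x,y) = (y(1+βxy)/(1+αxy), x(1+αxy)/(1+βxy))`. -/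
noncomputable def phiS (α β : ℝ) (x y : ℝ) : ℝ × ℝ :=
  (y * (1 + β * x * y) / (1 + α * x * y),
   x * (1 + α * x * y) / (1 + β * x * y))

noncomputable def F12S (α β : ℝ) (p : ℝ × ℝ × ℝ) : ℝ × ℝ × ℝ :=
  ((phiS α β p.1 p.2.1).1, (phiS α β p.1 p.2.1).2, p.2.2)

noncomputable def F13S (α γ : ℝ) (p : ℝ × ℝ × ℝ) : ℝ × ℝ × ℝ :=
  ((phiS α γ p.1 p.2.2).1, p.2.1, (phiS α γ p.1 p.2.2).2)

noncomputable def F23S (β γ : ℝ) (p : ℝ × ℝ × ℝ) : ℝ × ℝ × ℝ :=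
  (p.1, (phiS β γ p.2.1 p.2.2).1, (phiS β γ p.2.1 p.2.2).2)

private lemma phiS_fst_pos {a b u v : ℝ} (ha : 0 < a) (hb : 0 < b)
    (hu : 0 < u) (hv : 0 < v) : 0 < (phiS a b u v).1 := by
  unfold phiS; dsimp only; positivity

private lemma phiS_snd_pos {a b u v : ℝ} (ha : 0 < a) (hb : 0 < b)
    (hu : 0 < u) (hv : 0 < v) : 0 < (phiS a b u v).2 := by
  unfold phiS; dsimp only; positivity

private lemma phiS_mul {a b u v : ℝ} (ha : 0 < a) (hb : 0 < b)
    (hu : 0 < u) (hv : 0 < v) :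
    (phiS a b u v).1 * (phiS a b u v).2 = u * v := by
  have h1 : (0:ℝ) < 1 + a * u * v := by positivity
  have h2 : (0:ℝ) < 1 + b * u * v := by positivity
  unfold phiS; dsimp only
  field_simp

set_option maxHeartbeats 1000000 in
private lemma yb_fst (α β γ : ℝ) (hα : 0 < α) (hβ : 0 < β) (hγ : 0 < γ)
    (x y z : ℝ) (hx : 0 < x) (hy : 0 < y) (hz : 0 < z) :
    (F12S α β (F13S α γ (F23S β γ (x, y, z)))).1
      = (F23S β γ (F13S α γ (F12S α β (x, y, z)))).1 := by
  have h1 : (0:ℝ) < 1 + α * x * y := by positivity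
  have h2 : (0:ℝ) < 1 + β * x * y := by positivity
  have h5 : (0:ℝ) < 1 + β * y * z := by positivity
  have h6 : (0:ℝ) < 1 + γ * y * z := by positivity
  simp only [F12S, F13S, F23S, phiS]
  field_simp
  ring

set_option maxHeartbeats 1000000 in
private lemma yb_trd (α β γ : ℝ) (hα : 0 < α) (hβ : 0 < β) (hγ : 0 < γ)
    (x y z : ℝ) (hx : 0 < x) (hy : 0 < y) (hz : 0 < z) :
    (F12S α β (F13S α γ (F23S β γ (x, y, z)))).2.2
      = (F23S β γ (F13S α γ (F12S α β (x, y, z)))).2.2 := by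
  have h1 : (0:ℝ) < 1 + α * x * y := by positivity
  have h2 : (0:ℝ) < 1 + β * x * y := by positivity
  have h5 : (0:ℝ) < 1 + β * y * z := by positivity
  have h6 : (0:ℝ) < 1 + γ * y * z := by positivity
  simp only [F12S, F13S, F23S, phiS]
  field_simp
  ring

/-- The scalar parametric map `φ^(α,β)` satisfies the parametric Yang–Baxter
equation on `(0,∞)³`. -/
theorem phiS_yang_baxter (α β γ : ℝ) (hα : 0 < α) (hβ : 0 < β) (hγ : 0 < γ)
    (x y z : ℝ) (hx : 0 < x) (hy : 0 < y) (hz : 0 < z) :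
    F12S α β (F13S α γ (F23S β γ (x, y, z)))
      = F23S β γ (F13S α γ (F12S α β (x, y, z))) := by
  -- intermediate positivity, left route
  have hy1 : 0 < (phiS β γ y z).1 := phiS_fst_pos hβ hγ hy hz
  have hz1 : 0 < (phiS β γ y z).2 := phiS_snd_pos hβ hγ hy hz
  have hx2 : 0 < (phiS α γ x (phiS β γ y z).2).1 := phiS_fst_pos hα hγ hx hz1
  have hz2 : 0 < (phiS α γ x (phiS β γ y z).2).2 := phiS_snd_pos hα hγ hx hz1
  -- intermediate positivity, right route
  have hx1' : 0 < (phiS α β x y).1 := phiS_fst_pos hα hβ hx hy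
  have hy1' : 0 < (phiS α β x y).2 := phiS_snd_pos hα hβ hx hy
  have hx2' : 0 < (phiS α γ (phiS α β x y).1 z).1 := phiS_fst_pos hα hγ hx1' hz
  have hz2' : 0 < (phiS α γ (phiS α β x y).1 z).2 := phiS_snd_pos hα hγ hx1' hz
  -- total product is invariant on each side
  have hL : (F12S α β (F13S α γ (F23S β γ (x, y, z)))).1 *
      ((F12S α β (F13S α γ (F23S β γ (x, y, z)))).2.1 *
       (F12S α β (F13S α γ (F23S β γ (x, y, z)))).2.2) = x * (y * z) := by
    simp only [F12S, F13S, F23S]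
    have s1 := phiS_mul hα hβ hx2 hy1
    have s2 := phiS_mul hα hγ hx hz1
    have s3 := phiS_mul hβ hγ hy hz
    calc (phiS α β (phiS α γ x (phiS β γ y z).2).1 (phiS β γ y z).1).1 *
          ((phiS α β (phiS α γ x (phiS β γ y z).2).1 (phiS β γ y z).1).2 *
           (phiS α γ x (phiS β γ y z).2).2)
        = ((phiS α β (phiS α γ x (phiS β γ y z).2).1 (phiS β γ y z).1).1 *
           (phiS α β (phiS α γ x (phiS β γ y z).2).1 (phiS β γ y z).1).2) *
          (phiS α γ x (phiS β γ y z).2).2 := by ring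
      _ = ((phiS α γ x (phiS β γ y z).2).1 * (phiS β γ y z).1) *
          (phiS α γ x (phiS β γ y z).2).2 := by rw [s1]
      _ = ((phiS α γ x (phiS β γ y z).2).1 * (phiS α γ x (phiS β γ y z).2).2) *
          (phiS β γ y z).1 := by ring
      _ = (x * (phiS β γ y z).2) * (phiS β γ y z).1 := by rw [s2]
      _ = x * ((phiS β γ y z).1 * (phiS β γ y z).2) := by ring
      _ = x * (y * z) := by rw [s3]
  have hR : (F23S β γ (F13S α γ (F12S α β (x, y, z)))).1 *
      ((F23S β γ (F13S α γ (F12S α β (x, y, z)))).2.1 *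
       (F23S β γ (F13S α γ (F12S α β (x, y, z)))).2.2) = x * (y * z) := by
    simp only [F12S, F13S, F23S]
    have s1 := phiS_mul hβ hγ hy1' hz2'
    have s2 := phiS_mul hα hγ hx1' hz
    have s3 := phiS_mul hα hβ hx hy
    calc (phiS α γ (phiS α β x y).1 z).1 *
          ((phiS β γ (phiS α β x y).2 (phiS α γ (phiS α β x y).1 z).2).1 *
           (phiS β γ (phiS α β x y).2 (phiS α γ (phiS α β x y).1 z).2).2)
        = (phiS α γ (phiS α β x y).1 z).1 *
          ((phiS α β x y).2 * (phiS α γ (phiS α β x y).1 z).2) := by rw [s1]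
      _ = ((phiS α γ (phiS α β x y).1 z).1 * (phiS α γ (phiS α β x y).1 z).2) *
          (phiS α β x y).2 := by ring
      _ = ((phiS α β x y).1 * z) * (phiS α β x y).2 := by rw [s2]
      _ = ((phiS α β x y).1 * (phiS α β x y).2) * z := by ring
      _ = (x * y) * z := by rw [s3]
      _ = x * (y * z) := by ring
  have e0 := yb_fst α β γ hα hβ hγ x y z hx hy hz
  have e2 := yb_trd α β γ hα hβ hγ x y z hx hy hz
  -- positivity of the relevant right-hand coordinates
  have hR1 : 0 < (F23S β γ (F13S α γ (F12S α β (x, y, z)))).1 := by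
    simp only [F12S, F13S, F23S]; exact phiS_fst_pos hα hγ hx1' hz
  have hR3 : 0 < (F23S β γ (F13S α γ (F12S α β (x, y, z)))).2.2 := by
    simp only [F12S, F13S, F23S]; exact phiS_snd_pos hβ hγ hy1' hz2'
  have key := hL.trans hR.symm
  rw [e0, e2] at key
  have e1 : (F12S α β (F13S α γ (F23S β γ (x, y, z)))).2.1
      = (F23S β γ (F13S α γ (F12S α β (x, y, z)))).2.1 := by
    have k2 := mul_left_cancel₀ hR1.ne' key
    have k3 : (F12S α β (F13S α γ (F23S β γ (x, y, z)))).2.1 *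
        (F23S β γ (F13S α γ (F12S α β (x, y, z)))).2.2
        = (F23S β γ (F13S α γ (F12S α β (x, y, z)))).2.1 *
          (F23S β γ (F13S α γ (F12S α β (x, y, z)))).2.2 := by
      rw [k2]
    exact mul_right_cancel₀ hR3.ne' k3
  exact Prod.ext e0 (Prod.ext e1 e2)
end

section
/- Let 𝔩 : Ω₊ → ℝ be differentiable on the cone of symmetric positive definite matrices with gradient 𝔩'(x) = (1/2)(c x⁻¹ + x⁻¹ c) for a fixed symmetric matrix c, and suppose x 𝔩'(y) y + y 𝔩'(y) x = 2 x 𝔩'(x) x for all x, y ∈ Ω₊. Then c is a scalar multiple of the identity, hence 𝔩'(x) = κ x⁻¹ for some κ ∈ ℝ. -/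
/-!
Putting `x = 1` in the functional equation and conjugating by `y` gives
`c y² + y² c = 2 y c y`, i.e. `y` commutes with `⁅y, c⁆`, for every positive definite `y`.
This condition is unchanged under `y ↦ y - 1`, and `1 + v vᵀ` is positive definite, so it
holds for `P = v vᵀ`; applied to `v` it says that `c v` is a multiple of `v`. An
endomorphism of which every vector is an eigenvector is a homothety.
-/

open Matrix

theorem Commute.lie_of_one_add {R : Type*} [Ring R] {p c : R} (h : Commute (1 + p) ⁅1 + p, c⁆) :
    Commute p ⁅p, c⁆ := by
  have hlie : ⁅1 + p, c⁆ = ⁅p, c⁆ := by simp only [Ring.lie_def]; noncomm_ring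
  rw [hlie] at h
  simpa using h.sub_left (Commute.one_left _)

namespace Matrix

variable {n K : Type*} [Fintype n] [Field K]

theorem mulVec_eq_smul_of_commute_lie_vecMulVec {c : Matrix n n K} {v : n → K}
    (hv : v ⬝ᵥ v ≠ 0) (h : Commute (vecMulVec v v) ⁅vecMulVec v v, c⁆) :
    c *ᵥ v = ((v ⬝ᵥ c *ᵥ v) / (v ⬝ᵥ v)) • v := by
  have hv' := congrArg (· *ᵥ v) h.eq
  simp only [Ring.lie_def, mul_sub, sub_mul, sub_mulVec, ← mulVec_mulVec, vecMulVec_mulVec,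
    mulVec_smul, op_smul_eq_smul] at hv'
  apply smul_right_injective _ (pow_ne_zero 2 hv)
  have hq : (v ⬝ᵥ v) ^ 2 * ((v ⬝ᵥ c *ᵥ v) / (v ⬝ᵥ v)) = (v ⬝ᵥ v) * (v ⬝ᵥ c *ᵥ v) := by
    field_simp
  simp only [smul_smul, hq]
  linear_combination (norm := module) hv'

theorem exists_eq_smul_one_of_forall_mulVec_eq_smul [DecidableEq n] {c : Matrix n n K}
    (h : ∀ v, ∃ a : K, c *ᵥ v = a • v) : ∃ κ : K, c = κ • 1 := by
  obtain ⟨κ, hκ⟩ := (toLin' c).exists_eq_smul_id_of_forall_notLinearIndependent fun v => by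
    obtain ⟨a, ha⟩ := h v
    rw [LinearIndependent.pair_iff]
    push Not
    exact ⟨a, -1, by simp [ha], by simp⟩
  exact ⟨κ, by simpa using congrArg LinearMap.toMatrix' hκ⟩

end Matrix

section

variable {n : Type*} [Fintype n] [DecidableEq n]

theorem Matrix.exists_eq_smul_one_of_forall_posDef_commute_lie {c : Matrix n n ℝ}
    (h : ∀ y : Matrix n n ℝ, y.PosDef → Commute y ⁅y, c⁆) : ∃ κ : ℝ, c = κ • 1 := by
  refine exists_eq_smul_one_of_forall_mulVec_eq_smul fun v => ?_
  rcases eq_or_ne v 0 with rfl | hv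
  · exact ⟨0, by simp⟩
  have hy : (1 + vecMulVec v v).PosDef := by
    simpa using PosDef.one.add_posSemidef (posSemidef_vecMulVec_self_star v)
  exact ⟨_, mulVec_eq_smul_of_commute_lie_vecMulVec (dotProduct_self_eq_zero.not.mpr hv)
    (h _ hy).lie_of_one_add⟩

theorem commute_lie_of_gradient {c : Matrix n n ℝ} {l' : Matrix n n ℝ → Matrix n n ℝ}
    (hl' : ∀ x : Matrix n n ℝ, x.PosDef → l' x = (1 / 2 : ℝ) • (c * x⁻¹ + x⁻¹ * c))
    (heq : ∀ x y : Matrix n n ℝ, x.PosDef → y.PosDef →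
      x * l' y * y + y * l' y * x = (2 : ℝ) • (x * l' x * x))
    {y : Matrix n n ℝ} (hy : y.PosDef) : Commute y ⁅y, c⁆ := by
  have hd : IsUnit y.det := (isUnit_iff_isUnit_det y).mp hy.isUnit
  have h := congrArg (y * · * y) (heq 1 y PosDef.one hy)
  rw [hl' 1 PosDef.one, hl' y hy, inv_one] at h
  simp only [mul_add, add_mul, smul_mul_assoc, mul_smul_comm, one_mul, mul_one, mul_assoc,
    nonsing_inv_mul _ hd, mul_nonsing_inv_cancel_left _ _ hd] at h
  simp only [Commute, SemiconjBy, Ring.lie_def, mul_sub, sub_mul, mul_assoc]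
  linear_combination (norm := module) (2 : ℝ) • h

end

theorem gradient_scalar_general {r : ℕ} (c : Matrix (Fin r) (Fin r) ℝ)
    (l' : Matrix (Fin r) (Fin r) ℝ → Matrix (Fin r) (Fin r) ℝ)
    (hl' : ∀ x : Matrix (Fin r) (Fin r) ℝ, x.PosDef →
      l' x = (1 / 2 : ℝ) • (c * x⁻¹ + x⁻¹ * c))
    (heq : ∀ x y : Matrix (Fin r) (Fin r) ℝ, x.PosDef → y.PosDef →
      x * l' y * y + y * l' y * x = (2 : ℝ) • (x * l' x * x)) :
    ∃ κ : ℝ, c = κ • (1 : Matrix (Fin r) (Fin r) ℝ) ∧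
      ∀ x : Matrix (Fin r) (Fin r) ℝ, x.PosDef → l' x = κ • x⁻¹ := by
  obtain ⟨κ, rfl⟩ :=
    exists_eq_smul_one_of_forall_posDef_commute_lie fun _ => commute_lie_of_gradient hl' heq
  refine ⟨κ, rfl, fun x hx => ?_⟩
  rw [hl' x hx]
  simp only [smul_mul_assoc, mul_smul_comm, one_mul, mul_one]
  module

/-- If the gradient of `𝔩` on the cone of symmetric positive definite matrices
is `𝔩'(x) = (1/2)(c x⁻¹ + x⁻¹ c)` for a fixed symmetric matrix `c`, and
`x 𝔩'(y) y + y 𝔩'(y) x = 2 x 𝔩'(x) x` for all positive definite `x, y`,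
then `c` is a scalar multiple of the identity and `𝔩'(x) = κ x⁻¹`. -/
theorem gradient_scalar {r : ℕ} (c : Matrix (Fin r) (Fin r) ℝ) (hc : c.IsSymm)
    (l' : Matrix (Fin r) (Fin r) ℝ → Matrix (Fin r) (Fin r) ℝ)
    (hl' : ∀ x : Matrix (Fin r) (Fin r) ℝ, x.PosDef →
      l' x = (1 / 2 : ℝ) • (c * x⁻¹ + x⁻¹ * c))
    (heq : ∀ x y : Matrix (Fin r) (Fin r) ℝ, x.PosDef → y.PosDef →
      x * l' y * y + y * l' y * x = (2 : ℝ) • (x * l' x * x)) :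
    ∃ κ : ℝ, c = κ • (1 : Matrix (Fin r) (Fin r) ℝ) ∧
      ∀ x : Matrix (Fin r) (Fin r) ℝ, x.PosDef → l' x = κ • x⁻¹ :=
  gradient_scalar_general c l' hl' heq
end

section
/- If c is a symmetric r×r matrix such that c y² + y² c = 2 y c y for all symmetric positive definite matrices y, then c commutes with every symmetric positive definite matrix and hence c is a scalar multiple of the identity. -/
/-!
For Hermitian `c` and `y`, the commutator `A = cy - yc` satisfies `Aᴴ = yc - cy` and
`tr (A Aᴴ) = tr ((cy² + y²c - 2ycy) c)`, so the hypothesis forces `A = 0` for every positive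
definite `y`. With `B = H / 2`, every Hermitian `H` equals `(1 + (B+1)ᴴ(B+1)) - (1 + BᴴB) - 1`, a
combination of positive definite matrices and `1`, so `c` commutes with all Hermitian matrices:
in particular with `Eᵢᵢ` and `Eᵢⱼ + Eⱼᵢ`, hence with `Eᵢⱼ = Eᵢᵢ (Eᵢⱼ + Eⱼᵢ)`, which makes `c` scalar.
-/

open scoped ComplexOrder

namespace Matrix

variable {n : Type*} [Fintype n]

theorem trace_commutator_mul_commutator {R : Type*} [CommRing R] (c y : Matrix n n R) :
    ((c * y - y * c) * (y * c - c * y)).trace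
      = ((c * (y * y) + (y * y) * c - (2 : R) • (y * c * y)) * c).trace := by
  have hcycy : (c * (y * (c * y))).trace = (y * (c * (y * c))).trace := by
    rw [trace_mul_comm c]; simp only [mul_assoc]
  have hyycc : (y * (y * (c * c))).trace = (y * (c * (c * y))).trace := by
    rw [trace_mul_comm y]; simp only [mul_assoc]
  simp only [mul_sub, sub_mul, add_mul, smul_mul, trace_sub, trace_add, trace_smul, smul_eq_mul,
    mul_assoc]
  linear_combination (-1 : R) * hcycy - hyycc

variable {𝕜 : Type*} [RCLike 𝕜]

theorem commute_of_mul_sq_add_sq_mul_eq {c y : Matrix n n 𝕜} (hc : c.IsHermitian)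
    (hy : y.IsHermitian) (h : c * (y * y) + (y * y) * c = (2 : 𝕜) • (y * c * y)) :
    Commute c y := by
  have hadj : (c * y - y * c)ᴴ = y * c - c * y := by
    rw [conjTranspose_sub, conjTranspose_mul, conjTranspose_mul, hc.eq, hy.eq]
  have htrace : ((c * y - y * c) * (c * y - y * c)ᴴ).trace = 0 := by
    rw [hadj, trace_commutator_mul_commutator, h, sub_self, zero_mul, trace_zero]
  exact sub_eq_zero.mp (trace_mul_conjTranspose_self_eq_zero_iff.mp htrace)

variable [DecidableEq n]

theorem commute_of_forall_posDef_commute {c H : Matrix n n 𝕜}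
    (hc : ∀ y : Matrix n n 𝕜, y.PosDef → Commute c y) (hH : H.IsHermitian) : Commute c H := by
  set B := (2⁻¹ : 𝕜) • H
  have hposDef (A : Matrix n n 𝕜) : (1 + Aᴴ * A).PosDef :=
    PosDef.one.add_posSemidef (posSemidef_conjTranspose_mul_self A)
  have hsplit : H = (1 + (B + 1)ᴴ * (B + 1)) - (1 + Bᴴ * B) - 1 := by
    have hB : Bᴴ = B := by simp [B, conjTranspose_smul, hH.eq]
    have hBB : B + B = H := by
      rw [← two_smul 𝕜, smul_smul, mul_inv_cancel₀ two_ne_zero, one_smul]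
    rw [conjTranspose_add, conjTranspose_one, hB, ← hBB]
    noncomm_ring
  rw [hsplit]
  exact ((hc _ (hposDef _)).sub_right (hc _ (hposDef _))).sub_right (Commute.one_right c)

theorem mem_range_scalar_of_forall_isHermitian_commute {α : Type*} [Semiring α] [StarRing α]
    {c : Matrix n n α} (hc : ∀ H : Matrix n n α, H.IsHermitian → Commute c H) :
    c ∈ Set.range (scalar n) := by
  refine mem_range_scalar_of_commute_single fun i j hij => ?_
  have hdiag : (single i i (1 : α)).IsHermitian := by
    simp [IsHermitian, conjTranspose_single]
  have hsymm : (single i j (1 : α) + single j i 1).IsHermitian := by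
    simp [IsHermitian, conjTranspose_single, add_comm]
  have hprod : single i i (1 : α) * (single i j 1 + single j i 1) = single i j 1 := by
    rw [mul_add, single_mul_single_same, single_mul_single_of_ne (h := hij), mul_one, add_zero]
  have hcomm := (hc _ hdiag).mul_right (hc _ hsymm)
  rw [hprod] at hcomm
  exact hcomm.symm

end Matrix

open Matrix

/-- If `c` is a symmetric matrix with `c y² + y² c = 2 y c y` for all symmetric
positive definite `y`, then `c` commutes with every symmetric positive definite
matrix and hence `c` is a scalar multiple of the identity. -/
theorem symm_comm_scalar {r : ℕ} (c : Matrix (Fin r) (Fin r) ℝ) (hc : c.IsSymm)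
    (h : ∀ y : Matrix (Fin r) (Fin r) ℝ, y.PosDef →
      c * (y * y) + (y * y) * c = (2 : ℝ) • (y * c * y)) :
    (∀ y : Matrix (Fin r) (Fin r) ℝ, y.PosDef → c * y = y * c) ∧
    ∃ κ : ℝ, c = κ • (1 : Matrix (Fin r) (Fin r) ℝ) := by
  have hcomm (y : Matrix (Fin r) (Fin r) ℝ) (hy : y.PosDef) : Commute c y :=
    commute_of_mul_sq_add_sq_mul_eq (isHermitian_iff_isSymm.mpr hc) hy.isHermitian (h y hy)
  obtain ⟨κ, hκ⟩ := mem_range_scalar_of_forall_isHermitian_commute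
    fun H hH => commute_of_forall_posDef_commute hcomm hH
  exact ⟨fun y hy => (hcomm y hy).eq, κ, by rw [← hκ, smul_one_eq_diagonal, scalar_apply]⟩
end
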